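/- arXiv:1604.04157 — 2 statements merged into one kernel-verified Lean document; each statement's English description precedes it below -/
import Mathlib

section
/- Let p, q be market clearing prices and profits, M a maximum-value perfect matching, and suppose buyer j is connected by an M-alternating path P = j, i_0, j_1, i_1, ..., j_k, i_k in the equality graph (starting with the matching edge (i_0, j)) to an item i_k. If p̃ is another market clearing price vector with p̃_{i_0} ≤ p_{i_0} - ε for some ε > 0, then p̃_{i_k} ≤ p_{i_k} - ε. -/
open Finset

noncomputable section

/-- Profit of buyer `j` at prices `p`: `max_i (v i j - p i)`. -/
def profit {n : ℕ} (v : Fin n → Fin n → ℝ) (p : Fin n → ℝ) (j : Fin n) : ℝ :=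
  ⨆ i, v i j - p i

/-- Value of a perfect matching, where buyer `j` is assigned item `M j`. -/
def mval {n : ℕ} (v : Fin n → Fin n → ℝ) (M : Fin n ≃ Fin n) : ℝ :=
  ∑ j, v (M j) j

/-- Maximum value of a perfect matching. -/
def vstar {n : ℕ} (v : Fin n → Fin n → ℝ) : ℝ :=
  ⨆ M : Fin n ≃ Fin n, mval v M

/-- `M` witnesses that `p` is market clearing: every buyer gets a profit-maximizing item. -/
def ClearingWitness {n : ℕ} (v : Fin n → Fin n → ℝ) (p : Fin n → ℝ) (M : Fin n ≃ Fin n) : Prop :=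
  ∀ j i', v i' j - p i' ≤ v (M j) j - p (M j)

/-- `p` is market clearing: some perfect matching assigns every buyer an item
maximizing her profit `v i j - p i`. -/
def IsMC {n : ℕ} (v : Fin n → Fin n → ℝ) (p : Fin n → ℝ) : Prop :=
  ∃ M : Fin n ≃ Fin n, ClearingWitness v p M

/-- Buyer-optimal market clearing prices: nonnegative, market clearing, and of
minimum total price among all nonnegative market clearing price vectors. -/
def BuyerOptimal {n : ℕ} (v : Fin n → Fin n → ℝ) (p : Fin n → ℝ) : Prop :=
  (∀ i, 0 ≤ p i) ∧ IsMC v p ∧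
    ∀ p' : Fin n → ℝ, (∀ i, 0 ≤ p' i) → IsMC v p' → ∑ i, p i ≤ ∑ i, p' i

/-- `v*_{-j}`: maximum matching value when buyer `j` is replaced by a dummy
buyer with zero valuations. -/
def vstarDummy {n : ℕ} (v : Fin n → Fin n → ℝ) (j : Fin n) : ℝ :=
  ⨆ M : Fin n ≃ Fin n, ∑ j' ∈ Finset.univ.erase j, v (M j') j'

/-- `v*_{-j}^{-i}`: maximum value of a perfect matching between `I \ {i}` and `J \ {j}`. -/
def vstarRemove {n : ℕ} (v : Fin n → Fin n → ℝ) (i j : Fin n) : ℝ :=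
  ⨆ M : {i' : Fin n // i' ≠ i} ≃ {j' : Fin n // j' ≠ j},
    ∑ j' : {j' : Fin n // j' ≠ j}, v (M.symm j') j'

/-- Buyer `j` is joined, by an `M`-alternating path in the equality graph starting and
ending with a matching edge (`j = j_0, i_0 = M j_0, j_1, i_1 = M j_1, …, i_k = M j_k`),
to an item of price zero. -/
def AltPathZero {n : ℕ} (v : Fin n → Fin n → ℝ) (p : Fin n → ℝ) (M : Fin n ≃ Fin n)
    (j : Fin n) : Prop :=
  ∃ k : ℕ, ∃ js : Fin (k + 1) → Fin n,
    js 0 = j ∧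
    (∀ t : Fin k,
      p (M (js t.castSucc)) + profit v p (js t.succ) = v (M (js t.castSucc)) (js t.succ)) ∧
    p (M (js (Fin.last k))) = 0

/-- A (partial) matching given as a set of item-buyer pairs: pairwise non-incident edges. -/
def IsMatching {n : ℕ} (Mset : Finset (Fin n × Fin n)) : Prop :=
  ∀ e ∈ Mset, ∀ e' ∈ Mset, e ≠ e' → e.1 ≠ e'.1 ∧ e.2 ≠ e'.2

/-- All edges of `Mset` are equality edges w.r.t. the dual solution `(p, q)`. -/
def InEqualityGraph {n : ℕ} (v : Fin n → Fin n → ℝ) (p q : Fin n → ℝ)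
    (Mset : Finset (Fin n × Fin n)) : Prop :=
  ∀ e ∈ Mset, p e.1 + q e.2 = v e.1 e.2

/-- Item `i` is reachable from buyer `j` along an `Mset`-alternating path of equality
edges: `j = j_0, i_0, j_1, i_1, …, i_k = i`, where each `(i_t, j_t)` is a non-matching
equality edge and each `(i_t, j_{t+1})` is a matching edge. -/
def ReachFrom {n : ℕ} (v : Fin n → Fin n → ℝ) (p q : Fin n → ℝ)
    (Mset : Finset (Fin n × Fin n)) (j i : Fin n) : Prop :=
  ∃ k : ℕ, ∃ is js : Fin (k + 1) → Fin n,
    js 0 = j ∧ is (Fin.last k) = i ∧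
    (∀ t, p (is t) + q (js t) = v (is t) (js t) ∧ (is t, js t) ∉ Mset) ∧
    (∀ t : Fin k, (is t.castSucc, js t.succ) ∈ Mset)

lemma le_profit {n : ℕ} (v : Fin n → Fin n → ℝ) (p : Fin n → ℝ) (i j : Fin n) :
    v i j - p i ≤ profit v p j := by
  unfold profit
  exact le_ciSup (f := fun i => v i j - p i) (Set.finite_range _).bddAbove i

lemma cs_eq {n : ℕ} (v : Fin n → Fin n → ℝ) (p : Fin n → ℝ) (hMC : IsMC v p)
    (M : Fin n ≃ Fin n) (hMmax : mval v M = vstar v) (j : Fin n) :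
    profit v p j = v (M j) j - p (M j) := by
  haveI : Nonempty (Fin n) := ⟨j⟩
  obtain ⟨M₀, hM₀⟩ := hMC
  have hprof : ∀ j', profit v p j' = v (M₀ j') j' - p (M₀ j') := fun j' =>
    le_antisymm (ciSup_le fun i => hM₀ j' i) (le_profit v p (M₀ j') j')
  have hle : ∀ j' ∈ Finset.univ, v (M j') j' - p (M j') ≤ profit v p j' := fun j' _ =>
    le_profit v p (M j') j'
  have h1 : ∑ j', profit v p j' = mval v M₀ - ∑ i, p i := by
    simp only [hprof, mval, Finset.sum_sub_distrib]
    rw [Equiv.sum_comp M₀ p]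
  have h2 : ∑ j', (v (M j') j' - p (M j')) = mval v M - ∑ i, p i := by
    simp only [mval, Finset.sum_sub_distrib]
    rw [Equiv.sum_comp M p]
  have h3 : mval v M₀ ≤ mval v M := by
    rw [hMmax]; exact le_ciSup (Set.finite_range _).bddAbove M₀
  have hsum : ∑ j', profit v p j' = ∑ j', (v (M j') j' - p (M j')) := by
    refine le_antisymm (by linarith) (Finset.sum_le_sum hle)
  exact ((Finset.sum_eq_sum_iff_of_le hle).mp hsum.symm j (Finset.mem_univ j)).symm

/-- propagation of a price decrease along an `M`-alternating path
`j = j_0, i_0 = M j_0, j_1, i_1 = M j_1, …, i_k = M j_k` in the equality graph. -/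
theorem stmt_9 (n : ℕ) (v : Fin n → Fin n → ℝ) (hv : ∀ i j, 0 ≤ v i j)
    (p : Fin n → ℝ) (hp : ∀ i, 0 ≤ p i) (hMC : IsMC v p)
    (M : Fin n ≃ Fin n) (hMmax : mval v M = vstar v)
    (k : ℕ) (js : Fin (k + 1) → Fin n) (j : Fin n) (hjs0 : js 0 = j)
    (heq : ∀ t : Fin k,
      p (M (js t.castSucc)) + profit v p (js t.succ) = v (M (js t.castSucc)) (js t.succ))
    (p' : Fin n → ℝ) (hp' : ∀ i, 0 ≤ p' i) (hMC' : IsMC v p')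
    (ε : ℝ) (hε : 0 < ε) (h0 : p' (M (js 0)) ≤ p (M (js 0)) - ε) :
    p' (M (js (Fin.last k))) ≤ p (M (js (Fin.last k))) - ε := by
  haveI : Nonempty (Fin n) := ⟨j⟩
  have key : ∀ t : Fin (k + 1), p' (M (js t)) ≤ p (M (js t)) - ε := by
    intro t
    induction t using Fin.induction with
    | zero => exact h0
    | succ t ih =>
      have h1 := heq t
      have h2 : v (M (js t.castSucc)) (js t.succ) - p' (M (js t.castSucc)) ≤
          profit v p' (js t.succ) :=
        le_profit v p' (M (js t.castSucc)) (js t.succ)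
      have h3 := cs_eq v p hMC M hMmax (js t.succ)
      have h4 := cs_eq v p' hMC' M hMmax (js t.succ)
      linarith
  exact key (Fin.last k)

end
end

section
/- VCG prices equal buyer-optimal market clearing prices: if p is the buyer-optimal market clearing price vector and M is any maximum-value perfect matching, then for every (i,j) ∈ M, p_i = v*_{-j} - v*_{-j}^{-i}. -/
open Finset

noncomputable section

section vcg_aux

variable {n : ℕ} (v : Fin n → Fin n → ℝ) (p : Fin n → ℝ)

private lemma profit_ge' (i j : Fin n) : v i j - p i ≤ profit v p j :=
  le_ciSup (Set.finite_range fun i => v i j - p i).bddAbove i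

private lemma witness_eq' {M : Fin n ≃ Fin n} (hM : ClearingWitness v p M) (j : Fin n) :
    profit v p j = v (M j) j - p (M j) := by
  haveI : Nonempty (Fin n) := ⟨j⟩
  exact le_antisymm (ciSup_le fun i => hM j i) (profit_ge' v p (M j) j)

private lemma mval_le_dual' [Nonempty (Fin n)] (M' : Fin n ≃ Fin n) :
    mval v M' ≤ ∑ i, p i + ∑ j, profit v p j := by
  have h : ∀ j, v (M' j) j ≤ p (M' j) + profit v p j := by
    intro j; have := profit_ge' v p (M' j) j; linarith
  calc mval v M' ≤ ∑ j, (p (M' j) + profit v p j) := Finset.sum_le_sum fun j _ => h j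
    _ = ∑ j, p (M' j) + ∑ j, profit v p j := Finset.sum_add_distrib
    _ = ∑ i, p i + ∑ j, profit v p j := by rw [Equiv.sum_comp M' p]

private lemma mval_witness' {M : Fin n ≃ Fin n} (hM : ClearingWitness v p M) [Nonempty (Fin n)] :
    mval v M = ∑ i, p i + ∑ j, profit v p j := by
  have h : ∀ j, v (M j) j = p (M j) + profit v p j := by
    intro j; rw [witness_eq' v p hM j]; ring
  calc mval v M = ∑ j, (p (M j) + profit v p j) := Finset.sum_congr rfl fun j _ => h j
    _ = ∑ j, p (M j) + ∑ j, profit v p j := Finset.sum_add_distrib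
    _ = ∑ i, p i + ∑ j, profit v p j := by rw [Equiv.sum_comp M p]

private lemma vstar_eq' {M : Fin n ≃ Fin n} (hM : ClearingWitness v p M) [Nonempty (Fin n)] :
    vstar v = ∑ i, p i + ∑ j, profit v p j := by
  refine le_antisymm (ciSup_le fun M' => mval_le_dual' v p M') ?_
  rw [← mval_witness' v p hM]
  exact le_ciSup (Set.finite_range fun M : Fin n ≃ Fin n => mval v M).bddAbove M

private lemma max_is_witness' (hMC : IsMC v p) {M : Fin n ≃ Fin n} [Nonempty (Fin n)]
    (hmax : mval v M = vstar v) : ClearingWitness v p M := by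
  obtain ⟨M₀, hM₀⟩ := hMC
  have hsum : ∑ j, v (M j) j = ∑ j, (p (M j) + profit v p j) := by
    have h1 := vstar_eq' v p hM₀
    have h2 : ∑ j, (p (M j) + profit v p j) = ∑ i, p i + ∑ j, profit v p j := by
      rw [Finset.sum_add_distrib, Equiv.sum_comp M p]
    rw [h2, ← h1, ← hmax]; rfl
  have hle : ∀ j ∈ Finset.univ, v (M j) j ≤ p (M j) + profit v p j := by
    intro j _; have := profit_ge' v p (M j) j; linarith
  have heq : ∀ j ∈ Finset.univ, v (M j) j = p (M j) + profit v p j :=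
    (Finset.sum_eq_sum_iff_of_le hle).mp hsum
  intro j i'
  have h1 := heq j (Finset.mem_univ j)
  have h2 := profit_ge' v p i' j
  linarith

private lemma sum_subtype_ne' (j : Fin n) (f : Fin n → ℝ) :
    ∑ x : {x : Fin n // x ≠ j}, f x = ∑ x, f x - f j := by
  have h1 : ∑ x ∈ Finset.univ.erase j, f x = ∑ x : {x : Fin n // x ≠ j}, f x :=
    Finset.sum_subtype _ (by simp) f
  have h2 := Finset.sum_erase_add Finset.univ f (Finset.mem_univ j)
  linarith

end vcg_aux
section vcg_aux2

variable {n : ℕ} (v : Fin n → Fin n → ℝ) (p : Fin n → ℝ)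

private lemma perm_of_path' {M : Fin n ≃ Fin n} (hM : ClearingWitness v p M) (j : Fin n) :
    ∀ k (js : Fin (k + 1) → Fin n), js 0 = j →
      (∀ t : Fin k, p (M (js t.castSucc)) + profit v p (js t.succ)
         = v (M (js t.castSucc)) (js t.succ)) →
      ∃ σ : Fin n ≃ Fin n,
        (∀ j', j' ≠ j → p (σ j') + profit v p j' ≤ v (σ j') j') ∧
        σ j = M (js (Fin.last k)) ∧ ∀ x, x ∉ Set.range js → σ x = M x := by
  intro k
  induction k using Nat.strong_induction_on with
  | _ k IH =>
    intro js h0 hedge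
    match k with
    | 0 =>
      refine ⟨M, fun j' _ => ?_, by rw [show (Fin.last 0) = 0 from rfl, h0], fun x _ => rfl⟩
      rw [witness_eq' v p hM j']; ring_nf; exact le_refl _
    | (k + 1) =>
      set j₂ := js (Fin.last (k + 1)) with hj₂
      by_cases hcase : ∃ a : Fin (k + 1), js a.castSucc = j₂
      · -- truncate the path at an earlier occurrence of `j₂`
        obtain ⟨a, ha⟩ := hcase
        have hlt : (a : ℕ) < k + 1 := a.isLt
        set js'' : Fin ((a : ℕ) + 1) → Fin n := fun t => js (Fin.castLE (by omega) t) with hjs''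
        have h0'' : js'' 0 = j := by simpa [hjs''] using h0
        have hedge'' : ∀ t : Fin (a : ℕ), p (M (js'' t.castSucc)) + profit v p (js'' t.succ)
            = v (M (js'' t.castSucc)) (js'' t.succ) := by
          intro t
          have h := hedge (Fin.castLE (by omega) t)
          convert h using 3 <;> first
            | rfl
            | (apply congrArg; apply Fin.ext; simp)
        obtain ⟨σ, hσe, hσj, hσr⟩ := IH (a : ℕ) hlt js'' h0'' hedge''
        refine ⟨σ, hσe, ?_, fun x hx => hσr x ?_⟩
        · rw [hσj]
          have h : js'' (Fin.last (a : ℕ)) = j₂ := by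
            rw [hjs'']
            simp only
            rw [show (Fin.castLE (by omega : (a : ℕ) + 1 ≤ k + 1 + 1) (Fin.last (a : ℕ)))
              = a.castSucc from Fin.ext (by simp)]
            exact ha
          rw [h, hj₂]
        · rintro ⟨t, rfl⟩
          exact hx ⟨Fin.castLE (by omega) t, rfl⟩
      · -- extend the permutation for the path without the last step
        push_neg at hcase
        set js' : Fin (k + 1) → Fin n := fun t => js t.castSucc with hjs'
        have h0' : js' 0 = j := h0
        have hedge' : ∀ t : Fin k, p (M (js' t.castSucc)) + profit v p (js' t.succ)
            = v (M (js' t.castSucc)) (js' t.succ) := by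
          intro t
          have h := hedge t.castSucc
          convert h using 3 <;> first
            | rfl
            | (apply congrArg; apply Fin.ext; simp)
        obtain ⟨σ₁, hσe, hσj, hσr⟩ := IH k (by omega) js' h0' hedge'
        have hj₂r : j₂ ∉ Set.range js' := by
          rintro ⟨t, ht⟩; exact hcase t ht
        have hjne : j ≠ j₂ := by
          intro h; exact hj₂r ⟨0, by rw [h0', h]⟩
        have hσ₁j₂ : σ₁ j₂ = M j₂ := hσr j₂ hj₂r
        refine ⟨(Equiv.swap j j₂).trans σ₁, ?_, ?_, ?_⟩
        · intro j' hj'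
          by_cases hj'2 : j' = j₂
          · rw [hj'2]
            have hs : ((Equiv.swap j j₂).trans σ₁) j₂ = M (js (Fin.last k).castSucc) := by
              have h : ((Equiv.swap j j₂).trans σ₁) j₂ = σ₁ j := by
                simp [Equiv.swap_apply_right]
              rw [h, hσj]
            rw [hs]
            have he := hedge (Fin.last k)
            rw [Fin.succ_last] at he
            rw [← hj₂] at he
            exact he.le
          · have h : ((Equiv.swap j j₂).trans σ₁) j' = σ₁ j' := by
              simp [Equiv.swap_apply_of_ne_of_ne hj' hj'2]
            rw [h]; exact hσe j' hj'
        · have h : ((Equiv.swap j j₂).trans σ₁) j = σ₁ j₂ := by simp [Equiv.swap_apply_left]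
          rw [h, hσ₁j₂]
        · intro x hx
          have hx' : x ∉ Set.range js' := by
            rintro ⟨t, ht⟩; exact hx ⟨t.castSucc, ht⟩
          have hxj : x ≠ j := fun h => hx ⟨0, by rw [← h] at h0; exact h0⟩
          have hxj₂ : x ≠ j₂ := fun h => hx ⟨Fin.last (k + 1), h.symm⟩
          have h : ((Equiv.swap j j₂).trans σ₁) x = σ₁ x := by
            simp [Equiv.swap_apply_of_ne_of_ne hxj hxj₂]
          rw [h]; exact hσr x hx'

end vcg_aux2
section vcg_aux3

variable {n : ℕ} (v : Fin n → Fin n → ℝ) (p : Fin n → ℝ)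

open Classical in
private lemma exists_zero_path' (hopt : BuyerOptimal v p) {M : Fin n ≃ Fin n}
    (hM : ClearingWitness v p M) (j : Fin n) :
    ∃ k, ∃ js : Fin (k + 1) → Fin n, js 0 = j ∧
      (∀ t : Fin k, p (M (js t.castSucc)) + profit v p (js t.succ)
         = v (M (js t.castSucc)) (js t.succ)) ∧
      p (M (js (Fin.last k))) = 0 := by
  haveI : Nonempty (Fin n) := ⟨j⟩
  by_contra hno
  push_neg at hno
  set B : Finset (Fin n) := Finset.univ.filter (fun j' => ∃ k, ∃ js : Fin (k + 1) → Fin n,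
    js 0 = j ∧ (∀ t : Fin k, p (M (js t.castSucc)) + profit v p (js t.succ)
      = v (M (js t.castSucc)) (js t.succ)) ∧ js (Fin.last k) = j') with hB
  have hmemB : ∀ j', j' ∈ B ↔ ∃ k, ∃ js : Fin (k + 1) → Fin n,
      js 0 = j ∧ (∀ t : Fin k, p (M (js t.castSucc)) + profit v p (js t.succ)
        = v (M (js t.castSucc)) (js t.succ)) ∧ js (Fin.last k) = j' := by
    intro j'; simp [hB]
  have hjB : j ∈ B := by
    rw [hmemB]
    exact ⟨0, fun _ => j, rfl, fun t => t.elim0, rfl⟩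
  have hBne : B.Nonempty := ⟨j, hjB⟩
  have hBpos : ∀ j' ∈ B, 0 < p (M j') := by
    intro j' hj'
    rcases (hmemB j').mp hj' with ⟨k, js, h0, he, hl⟩
    have hne : p (M j') ≠ 0 := by
      intro h0'
      exact hno k js h0 he (by rw [hl]; exact h0')
    exact lt_of_le_of_ne (hopt.1 (M j')) (Ne.symm hne)
  have hclose : ∀ j' ∈ B, ∀ j'', p (M j') + profit v p j'' = v (M j') j'' → j'' ∈ B := by
    intro j' hj' j'' hedge
    rcases (hmemB j').mp hj' with ⟨k, js, h0, he, hl⟩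
    rw [hmemB]
    refine ⟨k + 1, Fin.snoc js j'', ?_, ?_, ?_⟩
    · rw [show (0 : Fin (k + 1 + 1)) = Fin.castSucc 0 from rfl, Fin.snoc_castSucc]; exact h0
    · intro t
      refine Fin.lastCases ?_ ?_ t
      · rw [Fin.succ_last, Fin.snoc_last,
          show (Fin.last k).castSucc = Fin.castSucc (Fin.last k) from rfl, Fin.snoc_castSucc, hl]
        exact hedge
      · intro t'
        rw [show (t'.castSucc).castSucc = Fin.castSucc t'.castSucc from rfl, Fin.snoc_castSucc,
          show (t'.castSucc).succ = Fin.castSucc t'.succ from (Fin.succ_castSucc t').symm,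
          Fin.snoc_castSucc]
        exact he t'
    · rw [Fin.snoc_last]
  have hslack : ∀ j' ∈ B, ∀ j'' ∉ B, 0 < p (M j') + profit v p j'' - v (M j') j'' := by
    intro j' hj' j'' hj''
    have h1 : v (M j') j'' - p (M j') ≤ profit v p j'' := profit_ge' v p (M j') j''
    rcases eq_or_lt_of_le h1 with h | h
    · exact absurd (hclose j' hj' j'' (by linarith [h])) hj''
    · linarith
  set f : Fin n → ℝ := fun j' => Finset.univ.inf' Finset.univ_nonempty
    (fun j'' => if j'' ∈ B then p (M j') else p (M j') + profit v p j'' - v (M j') j'') with hf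
  set ε : ℝ := B.inf' hBne f with hε
  have hεpos : 0 < ε := by
    rw [hε, Finset.lt_inf'_iff]
    intro j' hj'
    rw [hf]
    simp only
    rw [Finset.lt_inf'_iff]
    intro j'' _
    by_cases hmem : j'' ∈ B
    · simp only [hmem, if_true]; exact hBpos j' hj'
    · simp only [hmem, if_false]; exact hslack j' hj' j'' hmem
  have hεp : ∀ j' ∈ B, ε ≤ p (M j') := by
    intro j' hj'
    refine le_trans (Finset.inf'_le f hj') ?_
    rw [hf]
    refine le_trans (Finset.inf'_le _ (Finset.mem_univ j')) ?_
    simp [hj']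
  have hεs : ∀ j' ∈ B, ∀ j'' ∉ B, ε ≤ p (M j') + profit v p j'' - v (M j') j'' := by
    intro j' hj' j'' hj''
    refine le_trans (Finset.inf'_le f hj') ?_
    rw [hf]
    refine le_trans (Finset.inf'_le _ (Finset.mem_univ j'')) ?_
    simp [hj'']
  set p' : Fin n → ℝ := fun i => p i - (if M.symm i ∈ B then ε else 0) with hp'
  have hp'0 : ∀ i, 0 ≤ p' i := by
    intro i
    rw [hp']
    by_cases hmem : M.symm i ∈ B
    · simp only [hmem, if_true]
      have h := hεp (M.symm i) hmem
      rw [M.apply_symm_apply] at h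
      linarith
    · simp only [hmem, if_false]
      linarith [hopt.1 i]
  have hwit : ClearingWitness v p' M := by
    intro j'' i'
    have hMj : M.symm (M j'') = j'' := M.symm_apply_apply j''
    have base := hM j'' i'
    have hq := witness_eq' v p hM j''
    rw [hp']
    simp only [hMj]
    by_cases hj''B : j'' ∈ B
    · simp only [hj''B, if_true]
      by_cases hi'B : M.symm i' ∈ B
      · simp only [hi'B, if_true]; linarith
      · simp only [hi'B, if_false]; linarith
    · simp only [hj''B, if_false]
      by_cases hi'B : M.symm i' ∈ B
      · simp only [hi'B, if_true]
        have h := hεs (M.symm i') hi'B j'' hj''B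
        rw [M.apply_symm_apply] at h
        linarith
      · simp only [hi'B, if_false]; linarith
  have hsum : ∑ i, p' i = ∑ i, p i - B.card * ε := by
    rw [hp', Finset.sum_sub_distrib]
    congr 1
    have h1 : ∑ i, (if M.symm i ∈ B then ε else 0) = ∑ j'', (if j'' ∈ B then ε else 0) :=
      Equiv.sum_comp M.symm (fun j'' => if j'' ∈ B then ε else 0)
    rw [h1, Finset.sum_ite_mem, Finset.univ_inter, Finset.sum_const, nsmul_eq_mul]
  have hle := hopt.2.2 p' hp'0 ⟨M, hwit⟩
  rw [hsum] at hle
  have hcard : (0 : ℝ) < B.card := by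
    have h := Finset.card_pos.mpr hBne
    exact_mod_cast h
  nlinarith

end vcg_aux3
section vcg_aux4

variable {n : ℕ} (v : Fin n → Fin n → ℝ) (p : Fin n → ℝ)

private lemma vstarRemove_eq' {M : Fin n ≃ Fin n} (hM : ClearingWitness v p M) (j : Fin n) :
    vstarRemove v (M j) j = ∑ i, p i + ∑ j', profit v p j' - p (M j) - profit v p j := by
  haveI : Nonempty (Fin n) := ⟨j⟩
  have hE : ∀ a : Fin n, a ≠ j ↔ M a ≠ M j := fun a => (not_congr M.injective.eq_iff).symm
  set E : {j' : Fin n // j' ≠ j} ≃ {i' : Fin n // i' ≠ M j} := M.subtypeEquiv hE with hEdef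
  haveI : Nonempty ({i' : Fin n // i' ≠ M j} ≃ {j' : Fin n // j' ≠ j}) := ⟨E.symm⟩
  refine le_antisymm (ciSup_le fun M'' => ?_) ?_
  · have h1 : ∀ j' : {j' : Fin n // j' ≠ j}, v (M''.symm j') j' ≤
        p ((M''.symm j' : Fin n)) + profit v p j' := by
      intro j'; have := profit_ge' v p (M''.symm j') j'; linarith
    calc ∑ j' : {j' : Fin n // j' ≠ j}, v (M''.symm j') j'
        ≤ ∑ j' : {j' : Fin n // j' ≠ j}, (p ((M''.symm j' : Fin n)) + profit v p (j' : Fin n)) :=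
          Finset.sum_le_sum fun j' _ => h1 j'
      _ = ∑ j' : {j' : Fin n // j' ≠ j}, p ((M''.symm j' : Fin n))
          + ∑ j' : {j' : Fin n // j' ≠ j}, profit v p (j' : Fin n) := Finset.sum_add_distrib
      _ = ∑ i' : {i' : Fin n // i' ≠ M j}, p (i' : Fin n)
          + ∑ j' : {j' : Fin n // j' ≠ j}, profit v p (j' : Fin n) := by
            rw [Equiv.sum_comp M''.symm (fun i' : {i' : Fin n // i' ≠ M j} => p (i' : Fin n))]
      _ = (∑ i, p i - p (M j)) + (∑ j', profit v p j' - profit v p j) := by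
            rw [sum_subtype_ne' (M j) p, sum_subtype_ne' j (profit v p)]
      _ = ∑ i, p i + ∑ j', profit v p j' - p (M j) - profit v p j := by ring
  · refine le_trans (le_of_eq ?_) (le_ciSup
      (Set.finite_range fun M'' : {i' : Fin n // i' ≠ M j} ≃ {j' : Fin n // j' ≠ j} =>
        ∑ j' : {j' : Fin n // j' ≠ j}, v (M''.symm j') j').bddAbove E.symm)
    have hcoe : ∀ j' : {j' : Fin n // j' ≠ j}, ((E.symm.symm j' : Fin n)) = M (j' : Fin n) := by
      intro j'; rw [Equiv.symm_symm, hEdef]; rfl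
    have : ∑ j' : {j' : Fin n // j' ≠ j}, v ((E.symm.symm j' : Fin n)) (j' : Fin n)
        = ∑ j' : {j' : Fin n // j' ≠ j}, (p (M (j' : Fin n)) + profit v p (j' : Fin n)) := by
      refine Finset.sum_congr rfl fun j' _ => ?_
      rw [hcoe j', witness_eq' v p hM (j' : Fin n)]; ring
    rw [this, Finset.sum_add_distrib,
      sum_subtype_ne' j (fun x => p (M x)), sum_subtype_ne' j (profit v p),
      Equiv.sum_comp M p]
    ring

private lemma vstarDummy_eq' (hopt : BuyerOptimal v p) {M : Fin n ≃ Fin n}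
    (hM : ClearingWitness v p M) (j : Fin n) :
    vstarDummy v j = ∑ i, p i + ∑ j', profit v p j' - profit v p j := by
  haveI : Nonempty (Fin n) := ⟨j⟩
  refine le_antisymm (ciSup_le fun M' => ?_) ?_
  · have h1 : ∀ x ∈ Finset.univ.erase j, v (M' x) x ≤ p (M' x) + profit v p x := by
      intro x _; have := profit_ge' v p (M' x) x; linarith
    have h2 : ∑ x ∈ Finset.univ.erase j, p (M' x) ≤ ∑ i, p i := by
      rw [show ∑ x ∈ Finset.univ.erase j, p (M' x)
          = ∑ i ∈ (Finset.univ.erase j).image M', p i from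
        (Finset.sum_image (fun x _ y _ h => M'.injective h)).symm]
      exact Finset.sum_le_sum_of_subset_of_nonneg (Finset.subset_univ _)
        (fun i _ _ => hopt.1 i)
    have h3 : ∑ x ∈ Finset.univ.erase j, profit v p x = ∑ j', profit v p j' - profit v p j := by
      have := Finset.sum_erase_add Finset.univ (profit v p) (Finset.mem_univ j)
      linarith
    calc ∑ x ∈ Finset.univ.erase j, v (M' x) x
        ≤ ∑ x ∈ Finset.univ.erase j, (p (M' x) + profit v p x) := Finset.sum_le_sum h1
      _ = ∑ x ∈ Finset.univ.erase j, p (M' x) + ∑ x ∈ Finset.univ.erase j, profit v p x :=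
          Finset.sum_add_distrib
      _ ≤ ∑ i, p i + (∑ j', profit v p j' - profit v p j) := by rw [h3]; linarith
      _ = ∑ i, p i + ∑ j', profit v p j' - profit v p j := by ring
  · obtain ⟨k, js, h0, hedge, hzero⟩ := exists_zero_path' v p hopt hM j
    obtain ⟨σ, hσe, hσj, -⟩ := perm_of_path' v p hM j k js h0 hedge
    have hσ0 : p (σ j) = 0 := by rw [hσj]; exact hzero
    have hb : ∑ x ∈ Finset.univ.erase j, (p (σ x) + profit v p x) ≤ vstarDummy v j := by
      refine le_trans (Finset.sum_le_sum ?_) (le_ciSup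
        (Set.finite_range fun M' : Fin n ≃ Fin n =>
          ∑ j' ∈ Finset.univ.erase j, v (M' j') j').bddAbove σ)
      intro x hx
      exact hσe x (Finset.ne_of_mem_erase hx)
    refine le_trans (le_of_eq ?_) hb
    have h4 : ∑ x ∈ Finset.univ.erase j, p (σ x) = ∑ i, p i - p (σ j) := by
      have h5 := Finset.sum_erase_add Finset.univ (fun x => p (σ x)) (Finset.mem_univ j)
      have h6 : ∑ x, p (σ x) = ∑ i, p i := Equiv.sum_comp σ p
      linarith
    have h3 : ∑ x ∈ Finset.univ.erase j, profit v p x = ∑ j', profit v p j' - profit v p j := by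
      have := Finset.sum_erase_add Finset.univ (profit v p) (Finset.mem_univ j)
      linarith
    rw [Finset.sum_add_distrib, h4, h3, hσ0]
    ring

end vcg_aux4

/-- VCG prices equal buyer-optimal market clearing prices:
`p (M j) = v*_{-j} - v*_{-j}^{-(M j)}` for every matched pair. -/
theorem stmt_12 (n : ℕ) (v : Fin n → Fin n → ℝ) (hv : ∀ i j, 0 ≤ v i j)
    (p : Fin n → ℝ) (hopt : BuyerOptimal v p)
    (M : Fin n ≃ Fin n) (hMmax : mval v M = vstar v) :
    ∀ j, p (M j) = vstarDummy v j - vstarRemove v (M j) j := by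
  intro j
  haveI : Nonempty (Fin n) := ⟨j⟩
  have hM : ClearingWitness v p M := max_is_witness' v p hopt.2.1 hMmax
  rw [vstarDummy_eq' v p hopt hM j, vstarRemove_eq' v p hM j]
  ring

end
end
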